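/- Fix x : Fin M → L. The set {LAP(x, y) : y : Fin M → L, LAP(x, y) ≠ 0} is nonempty and its least element equals the minimum of dL(x i, f) over all i : Fin M and all f ∈ L with f ≠ x i. -/
import Mathlib


/-- The linear-assignment distance between two `M`-tuples of points of a metric space `L`:
the minimum over all permutations `σ` of `Fin M` of `∑ i, dist (x i) (y (σ i))`. -/
noncomputable def LAP {L : Type*} [MetricSpace L] {M : ℕ} (x y : Fin M → L) : ℝ :=
  Finset.univ.inf' Finset.univ_nonempty
    (fun σ : Equiv.Perm (Fin M) => ∑ i, dist (x i) (y (σ i)))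

theorem isLeast_nonzero_lap_values_from_point {L : Type*} [MetricSpace L] [Fintype L]
    [Nontrivial L] {M : ℕ} (hM : 0 < M) (x : Fin M → L) (δ : ℝ)
    (hδ : IsLeast {d : ℝ | ∃ (i : Fin M) (f : L), f ≠ x i ∧ d = dist (x i) f} δ) :
    IsLeast {v : ℝ | ∃ y : Fin M → L, LAP x y ≠ 0 ∧ v = LAP x y} δ := by
  classical
  obtain ⟨⟨i0, f0, hf0, hδeq⟩, hlb⟩ := hδ
  have hδpos : 0 < δ := by
    rw [hδeq]; exact dist_pos.mpr (Ne.symm hf0)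
  have key : ∀ (y : Fin M → L) (σ : Equiv.Perm (Fin M)),
      (∃ k, y (σ k) ≠ x k) → δ ≤ ∑ k, dist (x k) (y (σ k)) := by
    rintro y σ ⟨k, hk⟩
    calc δ ≤ dist (x k) (y (σ k)) := hlb ⟨k, y (σ k), hk, rfl⟩
      _ ≤ ∑ j, dist (x j) (y (σ j)) :=
        Finset.single_le_sum (f := fun j => dist (x j) (y (σ j))) (fun j _ => dist_nonneg) (Finset.mem_univ k)
  have lap_nonneg : ∀ y : Fin M → L, 0 ≤ LAP x y := by
    intro y
    obtain ⟨σ, _, hσ⟩ := Finset.exists_mem_eq_inf' (Finset.univ_nonempty)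
      (fun σ : Equiv.Perm (Fin M) => ∑ i, dist (x i) (y (σ i)))
    rw [LAP, hσ]
    exact Finset.sum_nonneg fun j _ => dist_nonneg
  constructor
  · -- membership: y = update x i0 f0 has LAP x y = δ
    set y := Function.update x i0 f0 with hy
    have hne : ∀ σ : Equiv.Perm (Fin M), ∃ k, y (σ k) ≠ x k := by
      intro σ
      by_contra h
      push_neg at h
      have hScard : (Finset.univ.filter fun k => x k = x i0).card
          = (Finset.univ.filter fun k => y k = x i0).card := by
        apply Finset.card_bij (fun k _ => σ k)
        · intro k hk
          simp only [Finset.mem_filter, Finset.mem_univ, true_and] at *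
          rw [h k]; exact hk
        · intro a _ b _ hab; exact σ.injective hab
        · intro m hm
          refine ⟨σ.symm m, ?_, by simp⟩
          simp only [Finset.mem_filter, Finset.mem_univ, true_and] at *
          rw [← h (σ.symm m)]
          simpa using hm
      have hfilter : (Finset.univ.filter fun k => y k = x i0)
          = (Finset.univ.filter fun k => x k = x i0).erase i0 := by
        ext k
        simp only [Finset.mem_filter, Finset.mem_erase, Finset.mem_univ, true_and]
        constructor
        · intro hk
          have hki : k ≠ i0 := by
            rintro rfl
            rw [hy, Function.update_self] at hk
            exact hf0 hk
          refine ⟨hki, ?_⟩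
          rwa [hy, Function.update_of_ne hki] at hk
        · rintro ⟨hki, hk⟩
          rw [hy, Function.update_of_ne hki]; exact hk
      have hi0 : i0 ∈ Finset.univ.filter fun k => x k = x i0 := by simp
      have hpos := Finset.card_pos.mpr ⟨i0, hi0⟩
      rw [hfilter, Finset.card_erase_of_mem hi0] at hScard
      omega
    have hle : LAP x y ≤ δ := by
      have h1 : (∑ k, dist (x k) (y ((1 : Equiv.Perm (Fin M)) k))) = δ := by
        simp only [Equiv.Perm.one_apply]
        rw [Finset.sum_eq_single i0]
        · rw [hy, Function.update_self, hδeq]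
        · intro j _ hj
          rw [hy, Function.update_of_ne hj, dist_self]
        · intro hcon; exact absurd (Finset.mem_univ i0) hcon
      calc LAP x y ≤ ∑ k, dist (x k) (y ((1 : Equiv.Perm (Fin M)) k)) :=
            Finset.inf'_le _ (Finset.mem_univ 1)
        _ = δ := h1
    have hge : δ ≤ LAP x y :=
      Finset.le_inf' _ _ fun σ _ => key y σ (hne σ)
    have heq : LAP x y = δ := le_antisymm hle hge
    exact ⟨y, by rw [heq]; exact ne_of_gt hδpos, heq.symm⟩
  · -- lower bound
    rintro v ⟨y, hy0, rfl⟩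
    apply Finset.le_inf'
    intro σ _
    apply key
    by_contra h
    push_neg at h
    have hsum : (∑ k, dist (x k) (y (σ k))) = 0 :=
      Finset.sum_eq_zero fun k _ => by rw [h k, dist_self]
    have : LAP x y ≤ 0 := by
      calc LAP x y ≤ ∑ k, dist (x k) (y (σ k)) := Finset.inf'_le _ (Finset.mem_univ σ)
        _ = 0 := hsum
    exact hy0 (le_antisymm this (lap_nonneg y))
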